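/- arXiv:2204.14149 — 4 statements merged into one kernel-verified Lean document; each statement's English description precedes it below -/
import Mathlib

section
/- For all real numbers $s$ with $1/2 < s < 3/4$ and all $x$ with $3/5 \le x \le 1/(1+(2-2^{4s-3})^{1/(4s-3)})$, one has $2x^{4s-3} \ge (1-x)^{4s-3} + (1+x)^{4s-3}$. -/
theorem stmt0 (s x : ℝ) (hs1 : 1/2 < s) (hs2 : s < 3/4)
    (hx1 : 3/5 ≤ x)
    (hx2 : x ≤ 1 / (1 + (2 - (2:ℝ) ^ (4*s-3)) ^ (1/(4*s-3)))) :
    2 * x ^ (4*s-3) ≥ (1-x) ^ (4*s-3) + (1+x) ^ (4*s-3) := by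
  set t : ℝ := 4*s-3 with ht
  have ht0 : t < 0 := by rw [ht]; linarith
  have h2t : (2:ℝ) ^ t < 1 := Real.rpow_lt_one_of_one_lt_of_neg (by norm_num) ht0
  have h2pos : (0:ℝ) < 2 - (2:ℝ) ^ t := by linarith
  set c : ℝ := (2 - (2:ℝ) ^ t) ^ (1/t) with hcdef
  have hc : 0 < c := Real.rpow_pos_of_pos h2pos _
  have hx : (0:ℝ) < x := by linarith
  have hx1c : x ≤ 1 / (1 + c) := hx2
  have hxlt1 : x < 1 := by
    have h1 : 1 / (1 + c) < 1 := by
      rw [div_lt_one (by linarith)]; linarith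
    linarith
  have hcx : c ≤ (1 - x) / x := by
    rw [le_div_iff₀ hx]
    have := (le_div_iff₀ (by linarith : (0:ℝ) < 1 + c)).mp hx1c
    nlinarith
  have hct : c ^ t = 2 - (2:ℝ) ^ t := by
    rw [hcdef, ← Real.rpow_mul h2pos.le, one_div_mul_cancel (ne_of_lt ht0), Real.rpow_one]
  have hxt : 0 < x ^ t := Real.rpow_pos_of_pos hx _
  have key1 : (1 - x) ^ t ≤ (2 - (2:ℝ) ^ t) * x ^ t := by
    have h := Real.rpow_le_rpow_of_nonpos hc hcx ht0.le
    rw [hct, Real.div_rpow (by linarith : (0:ℝ) ≤ 1 - x) hx.le, div_le_iff₀ hxt] at h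
    exact h
  have key2 : (1 + x) ^ t ≤ (2:ℝ) ^ t * x ^ t := by
    have h2x : (0:ℝ) < 2 * x := by linarith
    have h := Real.rpow_le_rpow_of_nonpos h2x (by linarith : 2 * x ≤ 1 + x) ht0.le
    rwa [Real.mul_rpow (by norm_num) hx.le] at h
  nlinarith [key1, key2]
end

section
/- For every $s \in (1/2,1) \setminus \{3/4\}$, the quantity $x_*(1,s) := 1/(1+(2-2^{4s-3})^{1/(4s-3)})$ satisfies $3/5 < x_*(1,s) < 1$. -/
open Real

private lemma exp_convex_aux (c t : ℝ) (hc : c ≠ 0) (h1 : -1 < t) (h2 : t < 0) :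
    Real.exp (c * t) < (-t) * Real.exp (-c) + (1 + t) := by
  have h := strictConvexOn_exp.2 (Set.mem_univ (-c)) (Set.mem_univ 0)
    (show (-c) ≠ 0 by simpa using hc) (show (0:ℝ) < -t by linarith)
    (show (0:ℝ) < 1 + t by linarith) (by ring)
  simpa [smul_eq_mul, mul_comm] using h

private lemma key (t : ℝ) (h1 : -1 < t) (h2 : t < 1) (h3 : t ≠ 0) :
    0 < (2 - (2:ℝ) ^ t) ^ (1/t) ∧ (2 - (2:ℝ) ^ t) ^ (1/t) < 2/3 := by
  have h2t : (2:ℝ) ^ t < 2 := by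
    calc (2:ℝ) ^ t < 2 ^ (1:ℝ) := rpow_lt_rpow_of_exponent_lt one_lt_two h2
    _ = 2 := rpow_one 2
  have hbase : (0:ℝ) < 2 - 2 ^ t := by linarith
  refine ⟨rpow_pos_of_pos hbase _, ?_⟩
  rcases lt_or_gt_of_ne h3 with ht | ht
  · -- t < 0 : use strict convexity, g(t) < 2
    have e1 : (2:ℝ) ^ t = Real.exp (Real.log 2 * t) := by
      rw [rpow_def_of_pos (by norm_num)]
    have e2 : ((2:ℝ)/3) ^ t = Real.exp (Real.log (2/3) * t) := by
      rw [rpow_def_of_pos (by norm_num)]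
    have c1 : Real.exp (Real.log 2 * t) < (-t) * Real.exp (-Real.log 2) + (1 + t) :=
      exp_convex_aux _ _ (by positivity) h1 ht
    have c2 : Real.exp (Real.log (2/3) * t)
        < (-t) * Real.exp (-Real.log (2/3)) + (1 + t) := by
      refine exp_convex_aux _ _ ?_ h1 ht
      have : Real.log (2/3) < 0 := Real.log_neg (by norm_num) (by norm_num)
      linarith
    have v1 : Real.exp (-Real.log 2) = 1/2 := by
      rw [Real.exp_neg, Real.exp_log (by norm_num)]; norm_num
    have v2 : Real.exp (-Real.log (2/3)) = 3/2 := by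
      rw [Real.exp_neg, Real.exp_log (by norm_num)]
      norm_num
    have hg : (2:ℝ) ^ t + (2/3) ^ t < 2 := by
      rw [e1, e2]; rw [v1] at c1; rw [v2] at c2; linarith
    have hlt : ((2:ℝ)/3) ^ t < 2 - 2 ^ t := by linarith
    have h23 : (0:ℝ) < (2/3 : ℝ) ^ t := rpow_pos_of_pos (by norm_num) _
    have := rpow_lt_rpow_of_neg h23 hlt (show 1/t < 0 by
      exact div_neg_of_pos_of_neg one_pos ht)
    calc (2 - (2:ℝ) ^ t) ^ (1/t) < (((2:ℝ)/3) ^ t) ^ (1/t) := this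
      _ = (2/3 : ℝ) ^ (t * (1/t)) := by rw [← rpow_mul (by norm_num)]
      _ = 2/3 := by rw [mul_one_div_cancel h3, rpow_one]
  · -- t > 0 : AM-GM, g(t) > 2
    set u := (2:ℝ) ^ (t/2) with hu
    set v := ((2:ℝ)/3) ^ (t/2) with hv
    have hu2 : u ^ 2 = (2:ℝ) ^ t := by
      rw [hu, ← rpow_natCast ((2:ℝ)^(t/2)) 2, ← rpow_mul (by norm_num)]
      norm_num
    have hv2 : v ^ 2 = ((2:ℝ)/3) ^ t := by
      rw [hv, ← rpow_natCast (((2:ℝ)/3)^(t/2)) 2, ← rpow_mul (by norm_num)]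
      norm_num
    have huv : u * v = ((4:ℝ)/3) ^ (t/2) := by
      rw [hu, hv, ← mul_rpow (by norm_num) (by norm_num)]
      norm_num
    have huv1 : 1 < u * v := by
      rw [huv]
      exact one_lt_rpow_iff_of_pos (by norm_num) |>.2 (Or.inl ⟨by norm_num, by linarith⟩)
    have hg : 2 < (2:ℝ) ^ t + (2/3) ^ t := by
      rw [← hu2, ← hv2]; nlinarith [sq_nonneg (u - v)]
    have hlt : 2 - (2:ℝ) ^ t < (2/3 : ℝ) ^ t := by linarith
    have := rpow_lt_rpow (le_of_lt hbase) hlt (show (0:ℝ) < 1/t by positivity)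
    calc (2 - (2:ℝ) ^ t) ^ (1/t) < (((2:ℝ)/3) ^ t) ^ (1/t) := this
      _ = (2/3 : ℝ) ^ (t * (1/t)) := by rw [← rpow_mul (by norm_num)]
      _ = 2/3 := by rw [mul_one_div_cancel h3, rpow_one]

theorem stmt2 (s : ℝ) (hs1 : 1/2 < s) (hs2 : s < 1) (hs3 : s ≠ 3/4) :
    3/5 < 1 / (1 + (2 - (2:ℝ) ^ (4*s-3)) ^ (1/(4*s-3))) ∧
    1 / (1 + (2 - (2:ℝ) ^ (4*s-3)) ^ (1/(4*s-3))) < 1 := by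
  obtain ⟨ha, hb⟩ := key (4*s-3) (by linarith) (by linarith)
    (by intro h; apply hs3; linarith [h])
  set a := (2 - (2:ℝ) ^ (4*s-3)) ^ (1/(4*s-3))
  constructor
  · rw [show (3:ℝ)/5 = 1/(5/3) by norm_num]
    exact one_div_lt_one_div_of_lt (by linarith) (by linarith)
  · rw [div_lt_one (by linarith)]; linarith
end

section
/- Let $c = \frac{5\,\Gamma(1/4)^2}{48\,\Gamma(3/4)^2}$. Then for all $t \in (0, 5/9)$, $-\ln(1-t) + \ln t + c\,t^{-1}(1 - \tfrac{3}{2}t) \ge 0$. -/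
open Real

lemma gamma74_sq : Real.Gamma (7/4) ^ 2 ≤ Real.sqrt π / 2 := by
  have hconv := Real.convexOn_log_Gamma.2 (Set.mem_Ioi.2 (by norm_num : (0:ℝ) < 3/2))
    (Set.mem_Ioi.2 (by norm_num : (0:ℝ) < 2)) (by norm_num : (0:ℝ) ≤ 1/2)
    (by norm_num : (0:ℝ) ≤ 1/2) (by norm_num)
  have hpt : (1/2 : ℝ) • (3/2 : ℝ) + (1/2 : ℝ) • (2 : ℝ) = 7/4 := by norm_num
  rw [hpt] at hconv
  simp only [Function.comp_apply, smul_eq_mul] at hconv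
  have h32 : Real.Gamma (3/2) = (1/2) * Real.sqrt π := by
    have := Real.Gamma_add_one (s := 1/2) (by norm_num)
    rw [Real.Gamma_one_half_eq] at this
    norm_num at this ⊢
    linarith
  have h2 : Real.Gamma 2 = 1 := Real.Gamma_two
  have hpos : 0 < Real.Gamma (7/4) := Real.Gamma_pos_of_pos (by norm_num)
  have hsp : 0 < Real.sqrt π := Real.sqrt_pos.2 Real.pi_pos
  have key : Real.log (Real.Gamma (7/4) ^ 2) ≤ Real.log (Real.sqrt π / 2) := by
    rw [Real.log_pow]
    rw [h32, h2] at hconv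
    have : Real.log (Real.sqrt π / 2) = Real.log (1/2 * Real.sqrt π) := by ring_nf
    rw [this, Real.log_mul (by norm_num) hsp.ne']
    rw [Real.log_mul (by norm_num) hsp.ne', Real.log_one] at hconv
    linarith
  have := Real.exp_le_exp.2 key
  rwa [Real.exp_log (by positivity), Real.exp_log (by positivity)] at this

lemma gamma34_sq : Real.Gamma (3/4) ^ 2 ≤ 8 * Real.sqrt π / 9 := by
  have h74 : Real.Gamma (7/4) = 3/4 * Real.Gamma (3/4) := by
    have := Real.Gamma_add_one (s := 3/4) (by norm_num)
    norm_num at this ⊢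
    linarith
  have := gamma74_sq
  rw [h74] at this
  nlinarith

lemma c_ge (c : ℝ) (hc : c = 5 * Real.Gamma (1/4) ^ 2 / (48 * Real.Gamma (3/4) ^ 2)) :
    4/5 ≤ c := by
  have hrefl := Real.Gamma_mul_Gamma_one_sub (1/4)
  have hsin : Real.sin (π * (1/4)) = Real.sqrt 2 / 2 := by
    rw [show π * (1/4) = π/4 by ring, Real.sin_pi_div_four]
  rw [hsin] at hrefl
  have h34 : (1 : ℝ) - 1/4 = 3/4 := by norm_num
  rw [h34] at hrefl
  have hg34 : 0 < Real.Gamma (3/4) := Real.Gamma_pos_of_pos (by norm_num)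
  have hg14 : 0 < Real.Gamma (1/4) := Real.Gamma_pos_of_pos (by norm_num)
  have hs2 : Real.sqrt 2 ^ 2 = 2 := Real.sq_sqrt (by norm_num)
  have hs2pos : 0 < Real.sqrt 2 := Real.sqrt_pos.2 (by norm_num)
  -- Γ(1/4)^2 * Γ(3/4)^2 = 2 π^2
  have hsq : Real.Gamma (1/4) ^ 2 * Real.Gamma (3/4) ^ 2 = 2 * π ^ 2 := by
    have : (Real.Gamma (1/4) * Real.Gamma (3/4)) ^ 2 = (π / (Real.sqrt 2 / 2)) ^ 2 := by
      rw [hrefl]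
    have hπ2 : (π / (Real.sqrt 2 / 2)) ^ 2 = 2 * π ^ 2 := by
      rw [div_pow]
      rw [show (Real.sqrt 2 / 2) ^ 2 = Real.sqrt 2 ^ 2 / 4 by ring, hs2]
      ring
    nlinarith [this, hπ2]
  have h4 : Real.Gamma (3/4) ^ 4 ≤ 64 * π / 81 := by
    have h := gamma34_sq
    have hspi : Real.sqrt π ^ 2 = π := Real.sq_sqrt Real.pi_pos.le
    nlinarith [sq_nonneg (Real.Gamma (3/4)), Real.sqrt_nonneg π]
  -- c = 5 π^2 / (24 Γ(3/4)^4)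
  have hcval : c * (48 * Real.Gamma (3/4) ^ 2) = 5 * Real.Gamma (1/4) ^ 2 := by
    rw [hc]; field_simp
  have hpi : 3.1415 < π := by
    have := Real.pi_gt_d6
    linarith
  -- From hsq: Γ(1/4)^2 = 2π²/Γ(3/4)^2
  nlinarith [sq_nonneg (Real.Gamma (3/4)), mul_pos hg34 hg34, sq_nonneg π,
    mul_pos (mul_pos hg34 hg34) (mul_pos hg34 hg34), Real.pi_pos]

theorem stmt5 (c : ℝ) (hc : c = 5 * Real.Gamma (1/4) ^ 2 / (48 * Real.Gamma (3/4) ^ 2)) :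
    ∀ t ∈ Set.Ioo (0:ℝ) (5/9),
      0 ≤ -Real.log (1 - t) + Real.log t + c * t⁻¹ * (1 - 3/2 * t) := by
  have hc8 := c_ge c hc
  intro t ht
  obtain ⟨ht0, ht59⟩ := ht
  have h1t : 0 < 1 - t := by linarith
  have htinv : t * t⁻¹ = 1 := mul_inv_cancel₀ ht0.ne'
  have hcoef : 0 ≤ t⁻¹ * (1 - 3/2 * t) := by
    have : 0 < t⁻¹ := inv_pos.2 ht0
    nlinarith
  have hstep : (4/5 : ℝ) * t⁻¹ * (1 - 3/2 * t) ≤ c * t⁻¹ * (1 - 3/2 * t) := by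
    nlinarith
  rcases le_or_gt (1/4 : ℝ) t with hcase | hcase
  · -- big t: log t - log (1-t) ≥ 2 - 1/t
    have hlog := Real.log_le_sub_one_of_pos (show (0:ℝ) < (1-t)/t by positivity)
    rw [Real.log_div h1t.ne' ht0.ne'] at hlog
    have hdiv : (1 - t)/t = t⁻¹ - 1 := by field_simp
    rw [hdiv] at hlog
    have hti : t⁻¹ ≤ 4 := by
      rw [show (4:ℝ) = (1/4 : ℝ)⁻¹ by norm_num]
      exact inv_anti₀ (by norm_num) hcase
    nlinarith
  · -- small t
    set s := Real.sqrt t with hs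
    have hs0 : 0 < s := Real.sqrt_pos.2 ht0
    have hst : s ^ 2 = t := Real.sq_sqrt ht0.le
    have hs12 : s ≤ 1/2 := by nlinarith
    have hlogt : Real.log t = 2 * Real.log s := by
      rw [← hst, Real.log_pow]; push_cast; ring
    have hlogs := Real.log_le_sub_one_of_pos (show (0:ℝ) < s⁻¹ by positivity)
    rw [Real.log_inv] at hlogs
    have hsi : s * s⁻¹ = 1 := mul_inv_cancel₀ hs0.ne'
    have hlog1t : Real.log (1 - t) ≤ 0 := Real.log_nonpos (by linarith) (by linarith)
    have hti : t⁻¹ = s⁻¹ * s⁻¹ := by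
      rw [← hst]; rw [sq]; rw [mul_inv]
    have hsinv : 2 ≤ s⁻¹ := by
      rw [show s⁻¹ = 1/s from (one_div s).symm, le_div_iff₀ hs0]
      linarith
    nlinarith [hstep, mul_pos hs0 hs0]
end

section
/- For $x \in (0,1)$ and $s \in (1/2,1)$, $\int_{-1}^1 \frac{(1-xt)^{2s-3}}{(1-t^2)^s}\,dt = \frac{2^{1-2s}\,\Gamma(1-s)^2}{\Gamma(2-2s)}\,(1-x^2)^{s-2}$. -/
open Real MeasureTheory intervalIntegral

/-! The Möbius substitution `t = (2u - (1-x)) / D`, `D = 2xu + (1-x)`, maps `(0,1)` onto `(-1,1)`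
with `1 - xt = (1-x²)/D`, `1 - t² = 4u(1-u)(1-x²)/D²` and `dt = 2(1-x²)/D² du`. The integrand
becomes `2^(1-2s) (1-x²)^(s-2) u^(-s) (1-u)^(-s) D`, and since `D` is linear in `u` the integral
is `2x B(2-s, 1-s) + (1-x) B(1-s, 1-s)` up to that constant. As `B(a+1, a) = B(a, a)/2`, the two
coefficients become `x` and `1 - x`, which add up to `1`. -/

lemma ofReal_rpow_mul_one_sub_rpow {u : ℝ} (hu : u ∈ Set.Icc (0:ℝ) 1) (a b : ℝ) :
    ((u ^ (a - 1) * (1 - u) ^ (b - 1) : ℝ) : ℂ)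
      = (u : ℂ) ^ ((a : ℂ) - 1) * (1 - (u : ℂ)) ^ ((b : ℂ) - 1) := by
  rw [Complex.ofReal_mul, Complex.ofReal_cpow hu.1, Complex.ofReal_cpow (sub_nonneg.2 hu.2)]
  push_cast
  rfl

lemma integrableOn_rpow_mul_one_sub_rpow {a b : ℝ} (ha : 0 < a) (hb : 0 < b) :
    IntegrableOn (fun u : ℝ => u ^ (a - 1) * (1 - u) ^ (b - 1)) (Set.Ioo 0 1) := by
  have h : IntegrableOn
      (fun u : ℝ => ((u : ℂ) ^ ((a : ℂ) - 1) * (1 - (u : ℂ)) ^ ((b : ℂ) - 1)).re)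
      (Set.Ioc 0 1) :=
    (Complex.betaIntegral_convergent (u := a) (v := b) (by simpa) (by simpa)).1.re
  refine (h.mono_set Set.Ioo_subset_Ioc_self).congr_fun (fun u hu => ?_) measurableSet_Ioo
  simp only [← ofReal_rpow_mul_one_sub_rpow (Set.Ioo_subset_Icc_self hu), Complex.ofReal_re]

lemma integral_rpow_mul_one_sub_rpow {a b : ℝ} (ha : 0 < a) (hb : 0 < b) :
    ∫ u in Set.Ioo (0:ℝ) 1, u ^ (a - 1) * (1 - u) ^ (b - 1)
      = Gamma a * Gamma b / Gamma (a + b) := by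
  have hβ : Complex.betaIntegral a b
      = ((∫ u in Set.Ioo (0:ℝ) 1, u ^ (a - 1) * (1 - u) ^ (b - 1) : ℝ) : ℂ) := by
    rw [Complex.betaIntegral, intervalIntegral.integral_of_le zero_le_one,
      integral_Ioc_eq_integral_Ioo, ← integral_complex_ofReal]
    exact setIntegral_congr_fun measurableSet_Ioo fun u hu =>
      (ofReal_rpow_mul_one_sub_rpow (Set.Ioo_subset_Icc_self hu) a b).symm
  have h := Complex.betaIntegral_eq_Gamma_mul_div a b (by simpa) (by simpa)
  rw [hβ, ← Complex.ofReal_add, Complex.Gamma_ofReal, Complex.Gamma_ofReal,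
    Complex.Gamma_ofReal] at h
  exact_mod_cast h

noncomputable def betaSubst (x u : ℝ) : ℝ := (2 * u - (1 - x)) / (2 * x * u + (1 - x))

section betaSubst

variable {x : ℝ}

lemma betaSubst_denom_pos (hx : x ∈ Set.Ioo (-1) 1) {u : ℝ} (hu : u ∈ Set.Ioo (0:ℝ) 1) :
    0 < 2 * x * u + (1 - x) := by
  obtain ⟨hx0, hx1⟩ := hx; obtain ⟨hu0, hu1⟩ := hu
  nlinarith [mul_pos (sub_pos.2 hx1) (sub_pos.2 hu1), mul_pos (neg_lt_iff_pos_add.1 hx0) hu0]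

lemma hasDerivAt_betaSubst {u : ℝ} (hu : 2 * x * u + (1 - x) ≠ 0) :
    HasDerivAt (betaSubst x) (2 * (1 - x ^ 2) / (2 * x * u + (1 - x)) ^ 2) u := by
  have hnum : HasDerivAt (fun u : ℝ => 2 * u - (1 - x)) 2 u := by
    simpa using ((hasDerivAt_id u).const_mul 2).sub_const (1 - x)
  have hden : HasDerivAt (fun u : ℝ => 2 * x * u + (1 - x)) (2 * x) u := by
    simpa using ((hasDerivAt_id u).const_mul (2 * x)).add_const (1 - x)
  exact (hnum.div hden hu).congr_deriv (by ring)

lemma betaSubst_sub_betaSubst {u v : ℝ} (hu : 2 * x * u + (1 - x) ≠ 0)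
    (hv : 2 * x * v + (1 - x) ≠ 0) :
    betaSubst x u - betaSubst x v
      = 2 * (1 - x ^ 2) * (u - v) / ((2 * x * u + (1 - x)) * (2 * x * v + (1 - x))) := by
  rw [betaSubst, betaSubst, div_sub_div _ _ hu hv]; ring

lemma betaSubst_add_one {u : ℝ} (hu : 2 * x * u + (1 - x) ≠ 0) :
    betaSubst x u + 1 = 2 * (1 + x) * u / (2 * x * u + (1 - x)) := by
  rw [betaSubst, div_add_one hu]; ring

lemma one_sub_betaSubst {u : ℝ} (hu : 2 * x * u + (1 - x) ≠ 0) :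
    1 - betaSubst x u = 2 * (1 - x) * (1 - u) / (2 * x * u + (1 - x)) := by
  rw [betaSubst, one_sub_div hu]; ring

lemma one_sub_mul_betaSubst {u : ℝ} (hu : 2 * x * u + (1 - x) ≠ 0) :
    1 - x * betaSubst x u = (1 - x ^ 2) / (2 * x * u + (1 - x)) := by
  rw [betaSubst, mul_div_assoc', one_sub_div hu]; ring

lemma one_sub_betaSubst_sq {u : ℝ} (hu : 2 * x * u + (1 - x) ≠ 0) :
    1 - betaSubst x u ^ 2 = 4 * u * (1 - u) * (1 - x ^ 2) / (2 * x * u + (1 - x)) ^ 2 := by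
  rw [betaSubst, div_pow, one_sub_div (pow_ne_zero 2 hu)]; ring

lemma injOn_betaSubst (hx : x ∈ Set.Ioo (-1) 1) : Set.InjOn (betaSubst x) (Set.Ioo 0 1) := by
  intro u hu v hv huv
  have hDu := betaSubst_denom_pos hx hu
  have hDv := betaSubst_denom_pos hx hv
  have h := betaSubst_sub_betaSubst hDu.ne' hDv.ne'
  rw [huv, sub_self, eq_comm, div_eq_zero_iff, or_iff_left (mul_pos hDu hDv).ne',
    mul_eq_zero, or_iff_right, sub_eq_zero] at h
  · exact h
  · nlinarith [hx.1, hx.2]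

lemma mapsTo_betaSubst (hx : x ∈ Set.Ioo (-1) 1) :
    Set.MapsTo (betaSubst x) (Set.Ioo 0 1) (Set.Ioo (-1) 1) := by
  intro u hu
  have hD := betaSubst_denom_pos hx hu
  have hlo : 0 < betaSubst x u + 1 := by
    rw [betaSubst_add_one hD.ne']; exact div_pos (by nlinarith [hx.1, hu.1]) hD
  have hhi : 0 < 1 - betaSubst x u := by
    rw [one_sub_betaSubst hD.ne']; exact div_pos (by nlinarith [hx.2, hu.2]) hD
  exact ⟨by linarith, by linarith⟩

lemma image_betaSubst (hx : x ∈ Set.Ioo (-1) 1) :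
    betaSubst x '' Set.Ioo 0 1 = Set.Ioo (-1) 1 := by
  refine (mapsTo_betaSubst hx).image_subset.antisymm fun t ⟨ht0, ht1⟩ => ?_
  have hxt : 0 < 1 - x * t := by nlinarith [hx.1, hx.2]
  have hu : (1 - x) * (1 + t) / (2 * (1 - x * t)) ∈ Set.Ioo (0:ℝ) 1 := by
    constructor
    · exact div_pos (by nlinarith [hx.2]) (by linarith)
    · rw [div_lt_one (by linarith)]; nlinarith [hx.1]
  refine ⟨_, hu, ?_⟩
  rw [betaSubst, div_eq_iff (betaSubst_denom_pos hx hu).ne']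
  field_simp
  ring

end betaSubst

lemma two_mul_div_sq_mul_rpow_div_rpow {N D u v : ℝ} (s : ℝ) (hN : 0 < N) (hD : 0 < D)
    (hu : 0 < u) (hv : 0 < v) :
    2 * N / D ^ 2 * ((N / D) ^ (2 * s - 3) / (4 * u * v * N / D ^ 2) ^ s)
      = 2 ^ (1 - 2 * s) * N ^ (s - 2) * (u ^ (-s) * (v ^ (-s) * D)) := by
  apply Real.log_injOn_pos (Set.mem_Ioi.mpr (by positivity)) (Set.mem_Ioi.mpr (by positivity))
  simp (disch := positivity) only [Real.log_mul, Real.log_div, Real.log_rpow, Real.log_pow,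
    show (4:ℝ) = 2 ^ (2:ℕ) by norm_num]
  push_cast
  ring

lemma abs_deriv_smul_integrand_betaSubst {x : ℝ} (hx : x ∈ Set.Ioo (-1) 1) (s : ℝ) {u : ℝ}
    (hu : u ∈ Set.Ioo (0:ℝ) 1) :
    |2 * (1 - x ^ 2) / (2 * x * u + (1 - x)) ^ 2|
        • ((1 - x * betaSubst x u) ^ (2 * s - 3) / (1 - betaSubst x u ^ 2) ^ s)
      = 2 ^ (1 - 2 * s) * (1 - x ^ 2) ^ (s - 2)
        * (2 * x * (u ^ ((2 - s) - 1) * (1 - u) ^ ((1 - s) - 1))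
          + (1 - x) * (u ^ ((1 - s) - 1) * (1 - u) ^ ((1 - s) - 1))) := by
  have hD := betaSubst_denom_pos hx hu
  have hN : 0 < 1 - x ^ 2 := by nlinarith [hx.1, hx.2]
  rw [smul_eq_mul, abs_of_pos (by positivity), one_sub_mul_betaSubst hD.ne',
    one_sub_betaSubst_sq hD.ne', two_mul_div_sq_mul_rpow_div_rpow s hN hD hu.1 (sub_pos.2 hu.2),
    show 2 - s - 1 = 1 + -s by ring, show 1 - s - 1 = -s by ring, Real.rpow_add hu.1, Real.rpow_one]
  ring

theorem integral_one_sub_mul_rpow_div_one_sub_sq_rpow {x s : ℝ} (hx : x ∈ Set.Ioo (-1) 1)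
    (hs : s < 1) :
    ∫ t in (-1:ℝ)..1, (1 - x * t) ^ (2 * s - 3) / (1 - t ^ 2) ^ s
      = 2 ^ (1 - 2 * s) * Gamma (1 - s) ^ 2 / Gamma (2 - 2 * s) * (1 - x ^ 2) ^ (s - 2) := by
  have hderiv (u) (hu : u ∈ Set.Ioo (0:ℝ) 1) :=
    (hasDerivAt_betaSubst (betaSubst_denom_pos hx hu).ne').hasDerivWithinAt (s := Set.Ioo 0 1)
  have ha : 0 < 1 - s := by linarith
  have ha' : 0 < 2 - s := by linarith
  have hb : 0 < 2 - 2 * s := by linarith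
  have hbeta : Gamma (2 - s) * Gamma (1 - s) / Gamma (2 - s + (1 - s))
      = Gamma (1 - s) ^ 2 / Gamma (2 - 2 * s) / 2 := by
    rw [show 2 - s = (1 - s) + 1 by ring, Real.Gamma_add_one ha.ne',
      show 1 - s + 1 + (1 - s) = (2 - 2 * s) + 1 by ring, Real.Gamma_add_one hb.ne']
    field_simp [(Gamma_pos_of_pos hb).ne']
  rw [integral_of_le (by norm_num), integral_Ioc_eq_integral_Ioo, ← image_betaSubst hx,
    integral_image_eq_integral_abs_deriv_smul measurableSet_Ioo hderiv (injOn_betaSubst hx),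
    setIntegral_congr_fun measurableSet_Ioo fun u hu => abs_deriv_smul_integrand_betaSubst hx s hu,
    MeasureTheory.integral_const_mul,
    integral_add ((integrableOn_rpow_mul_one_sub_rpow ha' ha).const_mul _)
      ((integrableOn_rpow_mul_one_sub_rpow ha ha).const_mul _),
    MeasureTheory.integral_const_mul, MeasureTheory.integral_const_mul,
    integral_rpow_mul_one_sub_rpow ha' ha, integral_rpow_mul_one_sub_rpow ha ha, hbeta,
    show 1 - s + (1 - s) = 2 - 2 * s by ring]
  ring

theorem stmt8 (x s : ℝ) (hx : x ∈ Set.Ioo (0:ℝ) 1) (hs : s ∈ Set.Ioo (1/2 : ℝ) 1) :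
    ∫ t in (-1:ℝ)..1, (1 - x*t) ^ (2*s - 3) / (1 - t^2) ^ s
      = 2 ^ (1 - 2*s) * Real.Gamma (1 - s) ^ 2 / Real.Gamma (2 - 2*s)
        * (1 - x^2) ^ (s - 2) :=
  integral_one_sub_mul_rpow_div_one_sub_sq_rpow ⟨by linarith [hx.1], hx.2⟩ hs.2
end
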